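/- Let n ≥ 4 and α ∈ ℝ, and let Σ_α = {x ∈ ℝ^{n+1} : x_{n+1} = x_1 x_n + Σ_{i=2}^{n−1} x_i² + x_1² x_2 + α x_1⁴}. Then Σ_α is affinely homogeneous: for any two points a, b ∈ Σ_α there exists an affine bijection of ℝ^{n+1} that maps Σ_α onto Σ_α and maps a to b. -/

import Mathlib

/-- The hypersurface
`Σ_α = {x ∈ ℝ^{n+1} : x_{n+1} = x₁ x_n + Σ_{i=2}^{n−1} x_i² + x₁² x₂ + α x₁⁴}`
(coordinates are 0-indexed: `x₁ = x 0`, `x₂ = x 1`, `x_i = x (i-1)`, `x_n = x (n-1)`,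
`x_{n+1} = x n`). -/
def sigmaWinkelmann (n : ℕ) (hn : 4 ≤ n) (α : ℝ) : Set (Fin (n + 1) → ℝ) :=
  {x | x (Fin.last n) = x 0 * x ⟨n - 1, by omega⟩ +
    (∑ i : Fin (n + 1), if 1 ≤ (i : ℕ) ∧ (i : ℕ) ≤ n - 2 then x i ^ 2 else 0) +
    x 0 ^ 2 * x ⟨1, by omega⟩ + α * x 0 ^ 4}

/-!
For `t ∈ Σ_α` put `ψ_t x = t + L_t x`, where `L_t` is a product of three transvections
(shears along the coordinates `x₂`, `xₙ`, `x_{n+1}`) whose coefficients are polynomials in `t`.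
Write `Σ_α = {D = 0}` with `D(x) = x_{n+1} - F(x₁, …, xₙ)`, `F` the right-hand side of the
equation of `Σ_α`. The identity `D(ψ_t x) = D(x) + D(t)` shows that `ψ_t` preserves `Σ_α`,
and `ψ_t 0 = t`, so `ψ_b ∘ ψ_a⁻¹` is an affine symmetry of `Σ_α` carrying `a` to `b`.
-/

open Finset

def IsAffinelyHomogeneous {k V P : Type*} [Ring k] [AddCommGroup V] [Module k V]
    [AddTorsor V P] (S : Set P) : Prop :=
  ∀ a ∈ S, ∀ b ∈ S, ∃ φ : P ≃ᵃ[k] P, φ '' S = S ∧ φ a = b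

theorem IsAffinelyHomogeneous.of_forall_apply_eq {k V P : Type*} [Ring k] [AddCommGroup V]
    [Module k V] [AddTorsor V P] {S : Set P} (o : P) (ψ : P → P ≃ᵃ[k] P)
    (hψo : ∀ t ∈ S, ψ t o = t) (hψS : ∀ t ∈ S, ψ t ⁻¹' S = S) :
    IsAffinelyHomogeneous (k := k) S := by
  intro a ha b hb
  refine ⟨(ψ a).symm.trans (ψ b), ?_, ?_⟩
  · rw [AffineEquiv.coe_trans, Set.image_comp, AffineEquiv.image_symm, hψS a ha,
      ← hψS b hb, Set.image_preimage_eq _ (ψ b).surjective, hψS b hb]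
  · rw [AffineEquiv.trans_apply, (ψ a).symm_apply_eq.2 (hψo a ha).symm, hψo b hb]

theorem Finset.sum_eq_sum_add_sub_of_eq_off {ι G : Type*} [AddCommGroup G] [DecidableEq ι]
    {M : Finset ι} {i : ι} (hi : i ∈ M) {f g : ι → G} (h : ∀ j ∈ M, j ≠ i → f j = g j) :
    ∑ j ∈ M, f j = ∑ j ∈ M, g j + (f i - g i) := by
  rw [← add_sum_erase M f hi, ← add_sum_erase M g hi,
    sum_congr rfl fun j hj => h j (mem_of_mem_erase hj) (ne_of_mem_erase hj)]
  abel

theorem LinearEquiv.transvection_trans_transvection_trans_transvection_apply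
    {R V : Type*} [Ring R] [AddCommGroup V] [Module R V] {f₁ f₂ f₃ : Module.Dual R V}
    {v₁ v₂ v₃ : V} (h₁ : f₁ v₁ = 0) (h₂ : f₂ v₂ = 0) (h₃ : f₃ v₃ = 0) (h₁₂ : f₁ v₂ = 0)
    (h₁₃ : f₁ v₃ = 0) (h₂₃ : f₂ v₃ = 0) (x : V) :
    (transvection h₃).trans ((transvection h₂).trans (transvection h₁)) x
      = x + f₃ x • v₃ + f₂ x • v₂ + f₁ x • v₁ := by
  simp only [trans_apply, transvection.apply, map_add, map_smul, h₁₂, h₁₃, h₂₃, zero_smul,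
    add_zero]
  abel

namespace SigmaWinkelmann

open LinearMap

def i₂ {n : ℕ} (hn : 4 ≤ n) : Fin (n + 1) := ⟨1, by omega⟩

def iₙ {n : ℕ} (hn : 4 ≤ n) : Fin (n + 1) := ⟨n - 1, by omega⟩

def middle (n : ℕ) : Finset (Fin (n + 1)) := univ.filter fun i => 1 ≤ (i : ℕ) ∧ (i : ℕ) ≤ n - 2

section

variable {n : ℕ} (hn : 4 ≤ n)

include hn in
theorem zero_ne_last : (0 : Fin (n + 1)) ≠ Fin.last n := by simp [Fin.ext_iff]; omega

theorem zero_ne_i₂ : (0 : Fin (n + 1)) ≠ i₂ hn := by simp [i₂, Fin.ext_iff]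

theorem zero_ne_iₙ : (0 : Fin (n + 1)) ≠ iₙ hn := by simp [iₙ, Fin.ext_iff]; omega

theorem i₂_ne_iₙ : i₂ hn ≠ iₙ hn := by simp [i₂, iₙ, Fin.ext_iff]; omega

theorem i₂_ne_last : i₂ hn ≠ Fin.last n := by simp [i₂, Fin.ext_iff]; omega

theorem iₙ_ne_last : iₙ hn ≠ Fin.last n := by simp [iₙ, Fin.ext_iff]; omega

theorem i₂_mem_middle : i₂ hn ∈ middle n := by simp [i₂, middle]; omega

theorem ne_last_of_mem_middle {j : Fin (n + 1)} (hj : j ∈ middle n) : j ≠ Fin.last n := by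
  simp only [middle, mem_filter, mem_univ, true_and] at hj
  simp [Fin.ext_iff]; omega

theorem ne_iₙ_of_mem_middle {j : Fin (n + 1)} (hj : j ∈ middle n) : j ≠ iₙ hn := by
  simp only [middle, mem_filter, mem_univ, true_and] at hj
  simp [iₙ, Fin.ext_iff]; omega

variable (α : ℝ) (t : Fin (n + 1) → ℝ)

def defect (x : Fin (n + 1) → ℝ) : ℝ :=
  x (Fin.last n) - (x 0 * x (iₙ hn) + ∑ i ∈ middle n, x i ^ 2 + x 0 ^ 2 * x (i₂ hn) + α * x 0 ^ 4)

theorem mem_sigmaWinkelmann_iff (x : Fin (n + 1) → ℝ) :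
    x ∈ sigmaWinkelmann n hn α ↔ defect hn α x = 0 := by
  rw [defect, sub_eq_zero, middle, sum_filter]
  rfl

/- The shears along `x₂` and `xₙ` cancel the part of `F(t + x) - F(t) - F(x)` that is nonlinear
in `x`, the shear along `x_{n+1}` cancels the remaining linear part; this is `defect_shift`. -/
def shearForm₂ : Module.Dual ℝ (Fin (n + 1) → ℝ) := (-4 * α * t 0) • proj 0

def shearFormₙ : Module.Dual ℝ (Fin (n + 1) → ℝ) :=
  (2 * α * t 0 ^ 2 - 16 * α ^ 2 * t 0 ^ 2 - t (i₂ hn)) • proj 0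
    + ((8 * α - 2) * t 0) • proj (i₂ hn)

def shearFormLast : Module.Dual ℝ (Fin (n + 1) → ℝ) :=
  (t (iₙ hn) + 2 * α * t 0 ^ 3 - 16 * α ^ 2 * t 0 ^ 3 + t 0 * t (i₂ hn)
      - 8 * α * t 0 * t (i₂ hn)) • proj 0
    + (8 * α * t 0 ^ 2 - t 0 ^ 2) • proj (i₂ hn) + t 0 • proj (iₙ hn)
    + ∑ j ∈ middle n, (2 * t j) • proj j

theorem shearForm₂_apply (x : Fin (n + 1) → ℝ) : shearForm₂ α t x = -4 * α * t 0 * x 0 := rfl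

theorem shearFormₙ_apply (x : Fin (n + 1) → ℝ) :
    shearFormₙ hn α t x = (2 * α * t 0 ^ 2 - 16 * α ^ 2 * t 0 ^ 2 - t (i₂ hn)) * x 0
      + (8 * α - 2) * t 0 * x (i₂ hn) := rfl

theorem shearFormLast_apply (x : Fin (n + 1) → ℝ) :
    shearFormLast hn α t x = (t (iₙ hn) + 2 * α * t 0 ^ 3 - 16 * α ^ 2 * t 0 ^ 3
        + t 0 * t (i₂ hn) - 8 * α * t 0 * t (i₂ hn)) * x 0
      + (8 * α * t 0 ^ 2 - t 0 ^ 2) * x (i₂ hn) + t 0 * x (iₙ hn)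
      + ∑ j ∈ middle n, 2 * t j * x j := by
  simp [shearFormLast]

theorem shearForm₂_apply_single {j : Fin (n + 1)} (hj : j ≠ 0) :
    shearForm₂ α t (Pi.single j 1) = 0 := by
  simp [shearForm₂_apply, Pi.single_eq_of_ne' hj]

theorem shearFormₙ_apply_single {j : Fin (n + 1)} (hj₀ : j ≠ 0) (hj₂ : j ≠ i₂ hn) :
    shearFormₙ hn α t (Pi.single j 1) = 0 := by
  simp [shearFormₙ_apply, Pi.single_eq_of_ne' hj₀, Pi.single_eq_of_ne' hj₂]

theorem shearFormLast_apply_single_last :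
    shearFormLast hn α t (Pi.single (Fin.last n) 1) = 0 := by
  rw [shearFormLast_apply, sum_eq_zero fun j hj => by
    rw [Pi.single_eq_of_ne (ne_last_of_mem_middle hj), mul_zero]]
  simp [zero_ne_last hn, i₂_ne_last hn, iₙ_ne_last hn]

noncomputable def linearPart : (Fin (n + 1) → ℝ) ≃ₗ[ℝ] (Fin (n + 1) → ℝ) :=
  (LinearEquiv.transvection (shearFormLast_apply_single_last hn α t)).trans
    ((LinearEquiv.transvection (shearFormₙ_apply_single hn α t (zero_ne_iₙ hn).symm
      (i₂_ne_iₙ hn).symm)).trans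
    (LinearEquiv.transvection (shearForm₂_apply_single α t (zero_ne_i₂ hn).symm)))

noncomputable def shift : (Fin (n + 1) → ℝ) ≃ᵃ[ℝ] (Fin (n + 1) → ℝ) :=
  (linearPart hn α t).toAffineEquiv.trans (AffineEquiv.constVAdd ℝ _ t)

theorem shift_zero : shift hn α t 0 = t := by
  simp [shift]

theorem shift_apply (x : Fin (n + 1) → ℝ) :
    shift hn α t x = t + (x + shearFormLast hn α t x • Pi.single (Fin.last n) 1
      + shearFormₙ hn α t x • Pi.single (iₙ hn) 1 + shearForm₂ α t x • Pi.single (i₂ hn) 1) := by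
  rw [shift, AffineEquiv.trans_apply, LinearEquiv.coe_toAffineEquiv, linearPart,
    LinearEquiv.transvection_trans_transvection_trans_transvection_apply _ _ _
      (shearForm₂_apply_single α t (zero_ne_iₙ hn).symm)
      (shearForm₂_apply_single α t (zero_ne_last hn).symm)
      (shearFormₙ_apply_single hn α t (zero_ne_last hn).symm (i₂_ne_last hn).symm)]
  rfl

variable (x : Fin (n + 1) → ℝ)

theorem shift_apply_zero : shift hn α t x 0 = t 0 + x 0 := by
  simp [shift_apply, zero_ne_last hn, zero_ne_iₙ hn, zero_ne_i₂ hn]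

theorem shift_apply_i₂ : shift hn α t x (i₂ hn) = t (i₂ hn) + (x (i₂ hn) + shearForm₂ α t x) := by
  simp [shift_apply, i₂_ne_last hn, i₂_ne_iₙ hn]

theorem shift_apply_iₙ :
    shift hn α t x (iₙ hn) = t (iₙ hn) + (x (iₙ hn) + shearFormₙ hn α t x) := by
  simp [shift_apply, iₙ_ne_last hn, (i₂_ne_iₙ hn).symm]

theorem shift_apply_last :
    shift hn α t x (Fin.last n) = t (Fin.last n) + (x (Fin.last n) + shearFormLast hn α t x) := by
  simp [shift_apply, (iₙ_ne_last hn).symm, (i₂_ne_last hn).symm]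

theorem shift_apply_of_mem_middle {j : Fin (n + 1)} (hj : j ∈ middle n) (hj₂ : j ≠ i₂ hn) :
    shift hn α t x j = t j + x j := by
  simp [shift_apply, ne_last_of_mem_middle hj, ne_iₙ_of_mem_middle hn hj, hj₂]

theorem defect_shift : defect hn α (shift hn α t x) = defect hn α x + defect hn α t := by
  have hmiddle : ∑ j ∈ middle n, shift hn α t x j ^ 2
      = ∑ j ∈ middle n, (t j + x j) ^ 2
        + (shift hn α t x (i₂ hn) ^ 2 - (t (i₂ hn) + x (i₂ hn)) ^ 2) :=
    sum_eq_sum_add_sub_of_eq_off (i₂_mem_middle hn) fun j hj hj₂ => by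
      rw [shift_apply_of_mem_middle hn α t x hj hj₂]
  have hsq : ∑ j ∈ middle n, (t j + x j) ^ 2
      = ∑ j ∈ middle n, x j ^ 2 + ∑ j ∈ middle n, 2 * t j * x j + ∑ j ∈ middle n, t j ^ 2 := by
    simp only [← sum_add_distrib]
    exact sum_congr rfl fun j _ => by ring
  rw [defect, defect, defect, hmiddle, hsq, shift_apply_zero, shift_apply_i₂, shift_apply_iₙ,
    shift_apply_last, shearForm₂_apply, shearFormₙ_apply, shearFormLast_apply]
  ring

theorem shift_preimage (ht : t ∈ sigmaWinkelmann n hn α) :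
    shift hn α t ⁻¹' sigmaWinkelmann n hn α = sigmaWinkelmann n hn α := by
  rw [mem_sigmaWinkelmann_iff] at ht
  ext x
  rw [Set.mem_preimage, mem_sigmaWinkelmann_iff, mem_sigmaWinkelmann_iff, defect_shift, ht,
    add_zero]

end

end SigmaWinkelmann

/-- Hypersurfaces (3) of Theorem 2 (higher-dimensional analogues of the Winkelmann
hypersurface): each `Σ_α` is affinely homogeneous — any point can be mapped to any other
point by an affine bijection of `ℝ^{n+1}` preserving `Σ_α`. -/
theorem sigmaWinkelmann_affinely_homogeneous (n : ℕ) (hn : 4 ≤ n) (α : ℝ) :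
    ∀ a ∈ sigmaWinkelmann n hn α, ∀ b ∈ sigmaWinkelmann n hn α,
      ∃ φ : (Fin (n + 1) → ℝ) ≃ᵃ[ℝ] (Fin (n + 1) → ℝ),
        φ '' sigmaWinkelmann n hn α = sigmaWinkelmann n hn α ∧ φ a = b :=
  IsAffinelyHomogeneous.of_forall_apply_eq 0 (SigmaWinkelmann.shift hn α)
    (fun t _ => SigmaWinkelmann.shift_zero hn α t) (SigmaWinkelmann.shift_preimage hn α)
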